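/- Let k ∈ ℕ₀, μ ∈ ℂ, and x ∈ (-1,1). Then P_k^{-μ}(x) = 2^μ (1+x)^{-μ} · k! · ∑_{j=0}^k ((2μ)_j / ((k-j)! · j!)) · ((1-x)/(1+x))^{j/2} · P_{k+μ}^{-j-μ}(x). -/

import Mathlib

noncomputable def pochC (a : ℂ) (n : ℕ) : ℂ := (ascPochhammer ℂ n).eval a

/-- Ferrers function of the first kind `P_ν^μ(x)`. -/
noncomputable def ferrersP (ν μ : ℂ) (x : ℝ) : ℂ :=
  (((1 + x) / (1 - x) : ℝ) : ℂ) ^ (μ / 2) *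
    ∑' n : ℕ, pochC (-ν) n * pochC (ν + 1) n /
        (Complex.Gamma ((n : ℂ) + 1 - μ) * (n.factorial : ℂ)) *
      (((1 - x) / 2 : ℝ) : ℂ) ^ n

/-!
Put `t = (1 - x) / 2`. Up to elementary powers, each Ferrers function is a regularized Gauss
series in `t`. Euler's transformation `F(a, b; c; t) = (1 - t)^(c - a - b) F(c - a, c - b; c; t)`
turns `P_{k+μ}^{-j-μ}(x)` into `(1 - t)^(j + μ)` times a polynomial of degree `k - j`; the
powers of `2`, `1 + x` and `(1 - x) / (1 + x)` then collapse to `((1 - x) / (1 + x))^(μ / 2) t^j`,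
and comparing coefficients of `t^N` on both sides leaves the Chu–Vandermonde identity.
Euler's transformation is the Cauchy product of `F(a, b; c; t)` with the binomial series of
`(1 - t)^(a + b - c)`, whose coefficients are summed by the Pfaff–Saalschütz identity.
-/

open Finset Polynomial Complex
open scoped Nat

section Pochhammer

variable {R : Type*} [CommRing R]

theorem ascPochhammer_eval_succ_left (r : R) (n : ℕ) :
    (ascPochhammer R (n + 1)).eval r = r * (ascPochhammer R n).eval (r + 1) := by
  simp [ascPochhammer_succ_left, eval_comp]

theorem ascPochhammer_eval_neg_sub_add_one (a : R) (n : ℕ) :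
    (ascPochhammer R n).eval (-a - n + 1) = (-1) ^ n * (ascPochhammer R n).eval a := by
  rw [show -a - n + 1 = -(a + n - 1) by ring, ascPochhammer_eval_neg_eq_descPochhammer,
    descPochhammer_eval_eq_ascPochhammer]
  ring_nf

theorem ascPochhammer_eval_neg_natCast_mul_factorial {p q : ℕ} (h : q ≤ p) :
    (ascPochhammer R q).eval (-(p : R)) * ((p - q)! : R) = (-1) ^ q * p ! := by
  rw [ascPochhammer_eval_neg_eq_descPochhammer, descPochhammer_eval_eq_descFactorial, mul_assoc,
    ← Nat.cast_mul, mul_comm (Nat.descFactorial _ _), Nat.factorial_mul_descFactorial h]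

/-- Chu–Vandermonde: the falling-factorial identity `Ring.descPochhammer_smeval_add`
at `-a` and `c + N - 1`. -/
theorem sum_neg_one_pow_mul_choose_mul_ascPochhammer (a c : R) (N : ℕ) :
    ∑ j ∈ range (N + 1), (-1) ^ j * (N.choose j : R) * (ascPochhammer R j).eval a *
      (ascPochhammer R (N - j)).eval (c + j) = (ascPochhammer R N).eval (c - a) := by
  have h := Ring.descPochhammer_smeval_add N (Commute.all (-a) (c + N - 1))
  simp only [descPochhammer_smeval_eq_ascPochhammer, ascPochhammer_smeval_eq_eval] at h
  rw [Nat.sum_antidiagonal_eq_sum_range_succ (fun i j => (N.choose i : R) *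
    ((ascPochhammer R i).eval (-a - i + 1) * (ascPochhammer R j).eval (c + N - 1 - j + 1)))] at h
  rw [show c - a = -a + (c + N - 1) - N + 1 by ring, h]
  refine sum_congr rfl fun j hj => ?_
  rw [Nat.cast_sub (mem_range_succ_iff.1 hj), ascPochhammer_eval_neg_sub_add_one,
    show c + N - 1 - (N - j) + 1 = c + j by ring]
  ring

end Pochhammer

section Saalschutz

variable {R : Type*} [CommRing R] (a b c : R)

noncomputable def saalschutzTerm (M n : ℕ) : R :=
  M.choose n * (ascPochhammer R n).eval a * (ascPochhammer R n).eval b *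
    (ascPochhammer R (M - n)).eval (c - a - b) * (ascPochhammer R (M - n)).eval (c + n)

/-- Zeilberger's certificate: the differences `G (n + 1) - G n` telescope
`saalschutzTerm (M + 1) - (c - a + M) (c - b + M) saalschutzTerm M`. -/
noncomputable def saalschutzCertificate (M n : ℕ) : R :=
  -(M.choose n * (ascPochhammer R (n + 1)).eval a * (ascPochhammer R (n + 1)).eval b *
    (ascPochhammer R (M - n)).eval (c - a - b) * (ascPochhammer R (M - n)).eval (c + n))

theorem saalschutzTerm_succ_zero (M : ℕ) :
    saalschutzTerm a b c (M + 1) 0 - (c - a + M) * (c - b + M) * saalschutzTerm a b c M 0 =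
      saalschutzCertificate a b c M 0 := by
  simp only [saalschutzTerm, saalschutzCertificate, Nat.choose_zero_right, Nat.sub_zero,
    ascPochhammer_succ_eval, ascPochhammer_zero, eval_one, Nat.cast_zero, Nat.cast_one, add_zero]
  ring

theorem saalschutzTerm_succ_succ {M n : ℕ} (h : n < M) :
    saalschutzTerm a b c (M + 1) (n + 1) -
        (c - a + M) * (c - b + M) * saalschutzTerm a b c M (n + 1) =
      saalschutzCertificate a b c M (n + 1) - saalschutzCertificate a b c M n := by
  obtain ⟨m, rfl⟩ := Nat.exists_eq_add_of_lt h
  have hchoose : ((n + m + 1).choose (n + 1) : R) * (n + 1) = (n + m + 1).choose n * (m + 1) := by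
    have := Nat.choose_succ_right_eq (n + m + 1) n
    rw [show n + m + 1 - n = m + 1 by omega] at this
    simpa using congrArg (Nat.cast : ℕ → R) this
  rw [saalschutzTerm, saalschutzTerm, saalschutzCertificate, saalschutzCertificate,
    show n + m + 1 + 1 - (n + 1) = m + 1 by omega, show n + m + 1 - (n + 1) = m by omega,
    show n + m + 1 - n = m + 1 by omega, Nat.choose_succ_succ', ascPochhammer_succ_eval (n + 1) a,
    ascPochhammer_succ_eval (n + 1) b, ascPochhammer_succ_eval m (c - a - b),
    ascPochhammer_succ_eval m (c + (n + 1 : ℕ)), ascPochhammer_eval_succ_left (c + n)]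
  simp only [Nat.cast_add, Nat.cast_one, ← add_assoc]
  linear_combination -(ascPochhammer R (n + 1)).eval a * (ascPochhammer R (n + 1)).eval b *
    (ascPochhammer R m).eval (c - a - b) * (ascPochhammer R m).eval (c + n + 1) *
    (c - a - b + m) * hchoose

theorem saalschutzTerm_succ_self (M : ℕ) :
    saalschutzTerm a b c (M + 1) (M + 1) = -saalschutzCertificate a b c M M := by
  simp [saalschutzTerm, saalschutzCertificate]

theorem sum_saalschutzTerm_succ (M : ℕ) :
    ∑ n ∈ range (M + 2), saalschutzTerm a b c (M + 1) n =
      (c - a + M) * (c - b + M) * ∑ n ∈ range (M + 1), saalschutzTerm a b c M n := by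
  rw [sum_range_succ, sum_range_succ', sum_range_succ' _ M, mul_add, mul_sum, ← sub_eq_zero]
  have htel : ∑ n ∈ range M, (saalschutzTerm a b c (M + 1) (n + 1) -
      (c - a + M) * (c - b + M) * saalschutzTerm a b c M (n + 1)) =
      saalschutzCertificate a b c M M - saalschutzCertificate a b c M 0 := by
    rw [← sum_range_sub]
    exact sum_congr rfl fun n hn => saalschutzTerm_succ_succ a b c (mem_range.1 hn)
  rw [sum_sub_distrib] at htel
  linear_combination htel + saalschutzTerm_succ_zero a b c M + saalschutzTerm_succ_self a b c M

theorem ascPochhammer_pfaff_saalschutz (M : ℕ) :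
    ∑ n ∈ range (M + 1), (M.choose n : R) * (ascPochhammer R n).eval a *
      (ascPochhammer R n).eval b * (ascPochhammer R (M - n)).eval (c - a - b) *
      (ascPochhammer R (M - n)).eval (c + n) =
      (ascPochhammer R M).eval (c - a) * (ascPochhammer R M).eval (c - b) := by
  induction M with
  | zero => simp
  | succ M ih =>
    have h := sum_saalschutzTerm_succ a b c M
    simp only [saalschutzTerm] at h
    rw [h, ih, ascPochhammer_succ_eval M (c - a), ascPochhammer_succ_eval M (c - b)]
    ring

end Saalschutz

theorem inv_factorial_mul_inv_factorial_sub {K : Type*} [Field K] [CharZero K] {n k : ℕ}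
    (h : k ≤ n) : ((k ! : K))⁻¹ * ((n - k)! : K)⁻¹ = n.choose k * (n ! : K)⁻¹ := by
  have : (n ! : K) ≠ 0 := Nat.cast_ne_zero.2 n.factorial_ne_zero
  rw [Nat.cast_choose K h]
  field_simp

/-- Valid for every `s`: Mathlib's `Gamma` vanishes at the poles `0, -1, -2, …`,
so both sides are `0` there. -/
theorem inv_Gamma_eq_mul_inv_Gamma_add_one (s : ℂ) :
    (Gamma s)⁻¹ = s * (Gamma (s + 1))⁻¹ := by
  rcases eq_or_ne s 0 with rfl | hs
  · simp
  · rw [Gamma_add_one s hs, mul_inv, ← mul_assoc, mul_inv_cancel₀ hs, one_mul]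

theorem inv_Gamma_eq_pochC_mul_inv_Gamma_add (s : ℂ) (m : ℕ) :
    (Gamma s)⁻¹ = pochC s m * (Gamma (s + m))⁻¹ := by
  induction m with
  | zero => simp [pochC]
  | succ m ih =>
    rw [ih, inv_Gamma_eq_mul_inv_Gamma_add_one (s + m), pochC, pochC, ascPochhammer_succ_eval]
    push_cast
    ring_nf

theorem pfaff_saalschutz_div_Gamma (a b c : ℂ) (M : ℕ) :
    ∑ n ∈ range (M + 1), pochC a n * pochC b n / (Gamma (c + n) * n !) *
      (pochC (c - a - b) (M - n) / (M - n)!) =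
      pochC (c - a) M * pochC (c - b) M / (Gamma (c + M) * M !) := by
  unfold pochC
  rw [← ascPochhammer_pfaff_saalschutz a b c M, sum_div]
  refine sum_congr rfl fun n hn => ?_
  have hnM := mem_range_succ_iff.1 hn
  have hGamma : (Gamma (c + n))⁻¹ = pochC (c + n) (M - n) * (Gamma (c + M))⁻¹ := by
    rw [inv_Gamma_eq_pochC_mul_inv_Gamma_add (c + n) (M - n), Nat.cast_sub hnM,
      add_add_sub_cancel]
  simp only [div_eq_mul_inv, mul_inv, hGamma, pochC]
  linear_combination (ascPochhammer ℂ n).eval a * (ascPochhammer ℂ n).eval b *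
    (ascPochhammer ℂ (M - n)).eval (c - a - b) * (ascPochhammer ℂ (M - n)).eval (c + n) *
    (Gamma (c + M))⁻¹ * inv_factorial_mul_inv_factorial_sub (K := ℂ) hnM

theorem mem_eball_zero_one_iff {E : Type*} [SeminormedAddCommGroup E] {z : E} :
    z ∈ Metric.eball (0 : E) 1 ↔ ‖z‖ < 1 := by
  rw [mem_eball_zero_iff, ← ofReal_norm, ENNReal.ofReal_lt_one]

theorem regularizedGaussHGFunSeries_apply_eq (a b c z : ℂ) (n : ℕ) :
    regularizedGaussHGFunSeries a b c n (fun _ => z) =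
      pochC a n * pochC b n / (Gamma (c + n) * n !) * z ^ n := by
  simp [regularizedGaussHGFunSeries, regularizedHGFunSeries, regularizedHGFunCoeff, pochC,
    mul_comm]

theorem regularizedGaussHGFun_eq_tsum (a b c z : ℂ) :
    regularizedGaussHGFun a b c z =
      ∑' n : ℕ, pochC a n * pochC b n / (Gamma (c + n) * n !) * z ^ n := by
  simp only [regularizedGaussHGFun, FormalMultilinearSeries.sum,
    regularizedGaussHGFunSeries_apply_eq]

theorem summable_norm_regularizedGaussHGFunSeries (a b c : ℂ) {z : ℂ} (hz : ‖z‖ < 1) :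
    Summable fun n : ℕ => ‖pochC a n * pochC b n / (Gamma (c + n) * n !) * z ^ n‖ := by
  have hr : z ∈ Metric.eball (0 : ℂ) (regularizedGaussHGFunSeries a b c).radius :=
    Metric.eball_subset_eball (radius_regularizedGaussHGFunSeries_ge_one a b c)
      (mem_eball_zero_one_iff.2 hz)
  simpa only [regularizedGaussHGFunSeries_apply_eq] using
    (regularizedGaussHGFunSeries a b c).summable_norm_apply hr

theorem choose_add_sub_one_eq_pochC_div_factorial (s : ℂ) (n : ℕ) :
    Ring.choose (s + n - 1) n = pochC s n / n ! := by
  rw [← Ring.multichoose_eq, eq_div_iff (by simp [Nat.factorial_ne_zero]), mul_comm,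
    ← nsmul_eq_mul, Ring.factorial_nsmul_multichoose_eq_ascPochhammer,
    ascPochhammer_smeval_eq_eval, pochC]

theorem hasSum_one_div_one_sub_cpow (s : ℂ) {z : ℂ} (hz : ‖z‖ < 1) :
    HasSum (fun n : ℕ => pochC s n / n ! * z ^ n) (1 / (1 - z) ^ s) := by
  have := (one_div_one_sub_cpow_hasFPowerSeriesOnBall_zero s).hasSum
    (mem_eball_zero_one_iff.2 hz)
  simpa [FormalMultilinearSeries.ofScalars_apply_eq, choose_add_sub_one_eq_pochC_div_factorial,
    mul_comm] using this

theorem summable_norm_one_div_one_sub_cpow (s : ℂ) {z : ℂ} (hz : ‖z‖ < 1) :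
    Summable fun n : ℕ => ‖pochC s n / n ! * z ^ n‖ := by
  have hf := one_div_one_sub_cpow_hasFPowerSeriesOnBall_zero s
  have := FormalMultilinearSeries.summable_norm_apply _ (x := z)
    (Metric.eball_subset_eball hf.r_le (mem_eball_zero_one_iff.2 hz))
  simpa [FormalMultilinearSeries.ofScalars_apply_eq, choose_add_sub_one_eq_pochC_div_factorial,
    mul_comm] using this

theorem regularizedGaussHGFun_mul_one_div_one_sub_cpow (a b c : ℂ) {z : ℂ} (hz : ‖z‖ < 1) :
    regularizedGaussHGFun a b c z * (1 / (1 - z) ^ (c - a - b)) =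
      regularizedGaussHGFun (c - a) (c - b) c z := by
  rw [regularizedGaussHGFun_eq_tsum, regularizedGaussHGFun_eq_tsum,
    ← (hasSum_one_div_one_sub_cpow _ hz).tsum_eq,
    tsum_mul_tsum_eq_tsum_sum_range_of_summable_norm
      (summable_norm_regularizedGaussHGFunSeries a b c hz)
      (summable_norm_one_div_one_sub_cpow _ hz)]
  refine tsum_congr fun M => ?_
  rw [← pfaff_saalschutz_div_Gamma, sum_mul]
  refine sum_congr rfl fun n hn => ?_
  rw [← pow_sub_mul_pow z (mem_range_succ_iff.1 hn)]
  ring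

theorem regularizedGaussHGFun_eq_one_sub_cpow_mul (a b c : ℂ) {z : ℂ} (hz : ‖z‖ < 1) :
    regularizedGaussHGFun a b c z =
      (1 - z) ^ (c - a - b) * regularizedGaussHGFun (c - a) (c - b) c z := by
  have hz1 : 1 - z ≠ 0 := fun h => by simp [← sub_eq_zero.1 h] at hz
  rw [← regularizedGaussHGFun_mul_one_div_one_sub_cpow a b c hz, mul_one_div,
    mul_div_cancel₀ _ (cpow_ne_zero_iff.2 (.inl hz1))]

theorem regularizedGaussHGFun_neg_natCast_eq_sum (b c z : ℂ) (m : ℕ) :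
    regularizedGaussHGFun (-m) b c z =
      ∑ n ∈ range (m + 1), pochC (-m) n * pochC b n / (Gamma (c + n) * n !) * z ^ n := by
  rw [regularizedGaussHGFun_eq_tsum]
  refine tsum_eq_sum fun n hn => ?_
  rw [pochC, ascPochhammer_eval_neg_coe_nat_of_lt (by simpa using hn)]
  simp

theorem ferrersP_coeff_summand_eq {k N j : ℕ} (hN : N ≤ k) (hjN : j ≤ N) (μ : ℂ) :
    pochC (2 * μ) j / ((k - j)! * j !) *
      (pochC (-(k - j : ℕ)) (N - j) * pochC (k + 2 * μ + 1 + j) (N - j) /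
        (Gamma (μ + 1 + j + (N - j : ℕ)) * (N - j)!)) =
      (-1) ^ j * N.choose j * pochC (2 * μ) j * pochC (k + 2 * μ + 1 + j) (N - j) *
        ((-1) ^ N / ((k - N)! * N !) * (Gamma (μ + 1 + N))⁻¹) := by
  have hneg : pochC (-(k - j : ℕ)) (N - j) * (k - N)! = (-1) ^ (N - j) * (k - j)! := by
    rw [show k - N = k - j - (N - j) by omega]
    exact ascPochhammer_eval_neg_natCast_mul_factorial (by omega)
  have hpoch : pochC (-(k - j : ℕ)) (N - j) = (-1) ^ (N - j) * (k - j)! * ((k - N)! : ℂ)⁻¹ :=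
    (eq_mul_inv_iff_mul_eq₀ (Nat.cast_ne_zero.2 (Nat.factorial_ne_zero _))).2 hneg
  have hfact : ((k - j)! : ℂ)⁻¹ * (k - j)! = 1 :=
    inv_mul_cancel₀ (Nat.cast_ne_zero.2 (Nat.factorial_ne_zero _))
  have hsign : (-1 : ℂ) ^ N = (-1) ^ (N - j) * (-1) ^ j := by
    rw [← pow_add, Nat.sub_add_cancel hjN]
  have hsq : (-1 : ℂ) ^ j * (-1) ^ j = 1 := by
    rw [← mul_pow]
    simp
  rw [Nat.cast_sub hjN, add_add_sub_cancel, hpoch, hsign]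
  simp only [div_eq_mul_inv, mul_inv]
  linear_combination pochC (2 * μ) j * (-1) ^ (N - j) * ((k - N)! : ℂ)⁻¹ *
    pochC (k + 2 * μ + 1 + j) (N - j) * (Gamma (μ + 1 + N))⁻¹ *
    ((j ! : ℂ)⁻¹ * ((N - j)! : ℂ)⁻¹ * hfact +
      inv_factorial_mul_inv_factorial_sub (K := ℂ) hjN - N.choose j * (N ! : ℂ)⁻¹ * hsq)

theorem factorial_mul_sum_ferrersP_coeff_summand_eq {k N : ℕ} (hN : N ≤ k) (μ : ℂ) :
    (k ! : ℂ) * ∑ j ∈ range (N + 1), pochC (2 * μ) j / ((k - j)! * j !) *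
      (pochC (-(k - j : ℕ)) (N - j) * pochC (k + 2 * μ + 1 + j) (N - j) /
        (Gamma (μ + 1 + j + (N - j : ℕ)) * (N - j)!)) =
      pochC (-k) N * pochC (k + 1) N / (Gamma (μ + 1 + N) * N !) := by
  have hvandermonde : ∑ j ∈ range (N + 1), (-1) ^ j * (N.choose j : ℂ) * pochC (2 * μ) j *
      pochC (k + 2 * μ + 1 + j) (N - j) = pochC (k + 1) N := by
    rw [show (k : ℂ) + 1 = k + 2 * μ + 1 - 2 * μ by ring]
    exact sum_neg_one_pow_mul_choose_mul_ascPochhammer _ _ N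
  have hneg : pochC (-k) N * (k - N)! = (-1) ^ N * k ! :=
    ascPochhammer_eval_neg_natCast_mul_factorial hN
  rw [sum_congr rfl fun j hj => ferrersP_coeff_summand_eq hN (mem_range_succ_iff.1 hj) μ,
    ← sum_mul, hvandermonde]
  simp only [div_eq_mul_inv, mul_inv]
  rw [(eq_mul_inv_iff_mul_eq₀ (Nat.cast_ne_zero.2 (Nat.factorial_ne_zero _))).2 hneg]
  ring

theorem factorial_mul_sum_range_mul_sum_range_eq (k : ℕ) (μ t : ℂ) :
    (k ! : ℂ) * ∑ j ∈ range (k + 1), pochC (2 * μ) j / ((k - j)! * j !) *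
      (t ^ j * ∑ M ∈ range (k - j + 1), pochC (-(k - j : ℕ)) M *
        pochC (k + 2 * μ + 1 + j) M / (Gamma (μ + 1 + j + M) * M !) * t ^ M) =
      ∑ N ∈ range (k + 1),
        pochC (-k) N * pochC (k + 1) N / (Gamma (μ + 1 + N) * N !) * t ^ N := by
  have hinner : ∀ j ∈ range (k + 1), pochC (2 * μ) j / ((k - j)! * j !) *
      (t ^ j * ∑ M ∈ range (k - j + 1), pochC (-(k - j : ℕ)) M *
        pochC (k + 2 * μ + 1 + j) M / (Gamma (μ + 1 + j + M) * M !) * t ^ M) =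
      ∑ M ∈ range (k + 1 - j), pochC (2 * μ) j / ((k - j)! * j !) *
        (pochC (-(k - j : ℕ)) M * pochC (k + 2 * μ + 1 + j) M / (Gamma (μ + 1 + j + M) * M !)) *
          t ^ (j + M) := by
    intro j hj
    rw [show k + 1 - j = k - j + 1 by have := mem_range_succ_iff.1 hj; omega, mul_sum, mul_sum]
    refine sum_congr rfl fun M _ => ?_
    ring
  rw [sum_congr rfl hinner, ← sum_range_diag_flip, mul_sum]
  refine sum_congr rfl fun N hN => ?_
  rw [← factorial_mul_sum_ferrersP_coeff_summand_eq (mem_range_succ_iff.1 hN), mul_assoc, sum_mul]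
  congr 1
  refine sum_congr rfl fun j hj => ?_
  rw [Nat.add_sub_cancel' (mem_range_succ_iff.1 hj)]

theorem ferrersP_eq_regularizedGaussHGFun (ν μ : ℂ) (x : ℝ) :
    ferrersP ν μ x = (((1 + x) / (1 - x) : ℝ) : ℂ) ^ (μ / 2) *
      regularizedGaussHGFun (-ν) (ν + 1) (1 - μ) (((1 - x) / 2 : ℝ) : ℂ) := by
  rw [ferrersP, regularizedGaussHGFun_eq_tsum]
  congr 1
  refine tsum_congr fun n => ?_
  rw [show (n : ℂ) + 1 - μ = 1 - μ + n by ring]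

theorem ferrersP_natCast_neg_eq_sum (k : ℕ) (μ : ℂ) (x : ℝ) :
    ferrersP k (-μ) x = (((1 + x) / (1 - x) : ℝ) : ℂ) ^ (-μ / 2) *
      ∑ N ∈ range (k + 1), pochC (-k) N * pochC (k + 1) N / (Gamma (μ + 1 + N) * N !) *
        (((1 - x) / 2 : ℝ) : ℂ) ^ N := by
  rw [ferrersP_eq_regularizedGaussHGFun, regularizedGaussHGFun_neg_natCast_eq_sum,
    sub_neg_eq_add, add_comm 1 μ]

theorem ofReal_cpow_eq_exp {r : ℝ} (hr : 0 < r) (w : ℂ) :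
    (r : ℂ) ^ w = exp (Real.log r * w) := by
  rw [cpow_def_of_ne_zero (ofReal_ne_zero.2 hr.ne'), ofReal_log hr.le]

theorem ferrersP_prefactor_eq {x : ℝ} (hx : -1 < x) (hx1 : x < 1) (μ : ℂ) (j : ℕ) :
    (2 : ℂ) ^ μ * ((1 + x : ℝ) : ℂ) ^ (-μ) *
      (((1 - x) / (1 + x) : ℝ) : ℂ) ^ ((j : ℂ) / 2) *
      ((((1 + x) / (1 - x) : ℝ) : ℂ) ^ ((-(j : ℂ) - μ) / 2) *
        (((1 + x) / 2 : ℝ) : ℂ) ^ ((j : ℂ) + μ)) =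
    (((1 + x) / (1 - x) : ℝ) : ℂ) ^ (-μ / 2) * (((1 - x) / 2 : ℝ) : ℂ) ^ j := by
  have hp : 0 < 1 + x := by linarith
  have hm : 0 < 1 - x := by linarith
  rw [← cpow_natCast, show (2 : ℂ) = ((2 : ℝ) : ℂ) by norm_num]
  simp only [ofReal_cpow_eq_exp two_pos, ofReal_cpow_eq_exp hp,
    ofReal_cpow_eq_exp (div_pos hm hp), ofReal_cpow_eq_exp (div_pos hp hm),
    ofReal_cpow_eq_exp (half_pos hp), ofReal_cpow_eq_exp (half_pos hm), ← exp_add]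
  congr 1
  rw [Real.log_div hm.ne' hp.ne', Real.log_div hp.ne' hm.ne', Real.log_div hp.ne' two_ne_zero,
    Real.log_div hm.ne' two_ne_zero]
  push_cast
  ring

theorem ferrersP_nat_add_eq_sum {k j : ℕ} (hjk : j ≤ k) (μ : ℂ) {x : ℝ} (hx : -1 < x)
    (hx1 : x < 1) :
    (2 : ℂ) ^ μ * ((1 + x : ℝ) : ℂ) ^ (-μ) *
      (((1 - x) / (1 + x) : ℝ) : ℂ) ^ ((j : ℂ) / 2) *
      ferrersP ((k : ℂ) + μ) (-(j : ℂ) - μ) x =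
    (((1 + x) / (1 - x) : ℝ) : ℂ) ^ (-μ / 2) * (((1 - x) / 2 : ℝ) : ℂ) ^ j *
      ∑ M ∈ range (k - j + 1), pochC (-(k - j : ℕ)) M * pochC (k + 2 * μ + 1 + j) M /
        (Gamma (μ + 1 + j + M) * M !) * (((1 - x) / 2 : ℝ) : ℂ) ^ M := by
  have ht : ‖(((1 - x) / 2 : ℝ) : ℂ)‖ < 1 := by
    rw [norm_real, Real.norm_eq_abs, abs_lt]
    constructor <;> linarith
  rw [ferrersP_eq_regularizedGaussHGFun, regularizedGaussHGFun_eq_one_sub_cpow_mul _ _ _ ht,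
    regularizedGaussHGFun_symm,
    show 1 - (-(j : ℂ) - μ) - ((k : ℂ) + μ + 1) = -((k - j : ℕ) : ℂ) by
      push_cast [Nat.cast_sub hjk]; ring,
    regularizedGaussHGFun_neg_natCast_eq_sum,
    show 1 - (-(j : ℂ) - μ) - -((k : ℂ) + μ) - ((k : ℂ) + μ + 1) = j + μ by ring,
    show 1 - (-(j : ℂ) - μ) - -((k : ℂ) + μ) = k + 2 * μ + 1 + j by ring,
    show 1 - (-(j : ℂ) - μ) = μ + 1 + j by ring,
    show 1 - (((1 - x) / 2 : ℝ) : ℂ) = (((1 + x) / 2 : ℝ) : ℂ) by push_cast; ring,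
    ← ferrersP_prefactor_eq hx hx1 μ j]
  ring

theorem stmt13 (k : ℕ) (μ : ℂ) (x : ℝ) (hx : -1 < x) (hx1 : x < 1) :
    ferrersP (k : ℂ) (-μ) x =
      (2 : ℂ) ^ μ * ((1 + x : ℝ) : ℂ) ^ (-μ) * (k.factorial : ℂ) *
        ∑ j ∈ Finset.range (k + 1),
          pochC (2 * μ) j / (((k - j).factorial : ℂ) * (j.factorial : ℂ)) *
            (((1 - x) / (1 + x) : ℝ) : ℂ) ^ ((j : ℂ) / 2) *
            ferrersP ((k : ℂ) + μ) (-(j : ℂ) - μ) x := by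
  rw [ferrersP_natCast_neg_eq_sum, ← factorial_mul_sum_range_mul_sum_range_eq, mul_sum, mul_sum,
    mul_sum]
  refine sum_congr rfl fun j hj => ?_
  linear_combination -((k ! : ℂ) * (pochC (2 * μ) j / ((k - j)! * j !))) *
    ferrersP_nat_add_eq_sum (mem_range_succ_iff.1 hj) μ hx hx1
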